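/- arXiv:2307.11399 — 5 statements merged into one kernel-verified Lean document; each statement's English description precedes it below -/
import Mathlib

section
/- Let p be a prime, q a power of p, W a nonzero finite-dimensional vector space over 𝔽_q, and Q ≤ H ≤ GL(W) with Q a finite p-group. Assume the fixed subspace Φ = {w ∈ W : g•w = w for all g ∈ Q} is one-dimensional. Then the subspace M_H spanned by all H-translates of Φ, i.e. the span of {w•x : w ∈ Φ, x ∈ H}, is a nonzero H-invariant subspace of W that is contained in every nonzero H-invariant subspace of W; in particular M_H is the unique minimal nonzero H-invariant subspace of W. -/
/-- The subspace of vectors fixed by every element of a subgroup `Q` of the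
linear automorphism group of `W`. -/
def fixedSubmodule (F W : Type*) [Field F] [AddCommGroup W] [Module F W]
    (Q : Subgroup (W ≃ₗ[F] W)) : Submodule F W where
  carrier := {w | ∀ g ∈ Q, g w = w}
  add_mem' := by
    intro u v hu hv g hg
    rw [map_add, hu g hg, hv g hg]
  zero_mem' := by
    intro g hg
    exact map_zero g
  smul_mem' := by
    intro t u hu g hg
    rw [map_smul, hu g hg]

/-- The span of all `H`-translates of the fixed space of `Q`. -/
def closureOfFixed (F W : Type*) [Field F] [AddCommGroup W] [Module F W]
    (Q H : Subgroup (W ≃ₗ[F] W)) : Submodule F W :=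
  Submodule.span F {w : W | ∃ v ∈ fixedSubmodule F W Q, ∃ x ∈ H, w = x v}

/-- If `Q ≤ H ≤ GL(W)` with `Q` a finite `p`-group whose fixed space `Φ` is
one-dimensional, then `M_H`, the span of all `H`-translates of `Φ`, is a nonzero
`H`-invariant subspace contained in every nonzero `H`-invariant subspace; in
particular it is the unique minimal nonzero `H`-invariant subspace of `W`. -/
theorem closureOfFixed_minimal
    (p : ℕ) (hp : p.Prime) (F : Type*) [Field F] [Fintype F]
    (hq : ∃ n : ℕ, 0 < n ∧ Fintype.card F = p ^ n)
    (W : Type*) [AddCommGroup W] [Module F W] [FiniteDimensional F W] [Nontrivial W]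
    (Q H : Subgroup (W ≃ₗ[F] W)) [Finite Q] (hQ : IsPGroup p Q) (hQH : Q ≤ H)
    (hfix : Module.finrank F ↥(fixedSubmodule F W Q) = 1) :
    closureOfFixed F W Q H ≠ ⊥ ∧
    (∀ x ∈ H, (closureOfFixed F W Q H).map (x : W ≃ₗ[F] W).toLinearMap =
        closureOfFixed F W Q H) ∧
    (∀ U : Submodule F W, U ≠ ⊥ →
        (∀ x ∈ H, U.map (x : W ≃ₗ[F] W).toLinearMap = U) →
        closureOfFixed F W Q H ≤ U) := by
  classical
  haveI : Fact p.Prime := ⟨hp⟩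
  set Φ := fixedSubmodule F W Q with hΦ
  have hΦne : Φ ≠ ⊥ := by
    intro h
    rw [h] at hfix
    simp [finrank_bot] at hfix
  obtain ⟨φ, hφΦ, hφ0⟩ := Submodule.exists_mem_ne_zero_of_ne_bot hΦne
  have hmap : ∀ x ∈ H, (closureOfFixed F W Q H).map (x : W ≃ₗ[F] W).toLinearMap ≤
      closureOfFixed F W Q H := by
    intro x hx
    rw [Submodule.map_le_iff_le_comap]
    apply Submodule.span_le.2
    rintro w ⟨v, hv, y, hy, rfl⟩
    exact Submodule.subset_span ⟨v, hv, x * y, H.mul_mem hx hy, rfl⟩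
  refine ⟨?_, ?_, ?_⟩
  · intro h
    have hmem : φ ∈ closureOfFixed F W Q H :=
      Submodule.subset_span ⟨φ, hφΦ, 1, H.one_mem, by simp⟩
    rw [h, Submodule.mem_bot] at hmem
    exact hφ0 hmem
  · intro x hx
    refine le_antisymm (hmap x hx) ?_
    intro w hw
    refine ⟨x⁻¹ w, hmap x⁻¹ (H.inv_mem hx) ⟨w, hw, rfl⟩, ?_⟩
    exact x.apply_symm_apply w
  · intro U hU hUinv
    have key : ∀ g ∈ H, ∀ u ∈ U, g u ∈ U := by
      intro g hg u hu
      rw [← hUinv g hg]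
      exact Submodule.mem_map_of_mem hu
    -- set up the action of Q on U
    letI : SMul Q U := ⟨fun g u => ⟨(g : W ≃ₗ[F] W) u.1, key _ (hQH g.2) u.1 u.2⟩⟩
    letI : MulAction Q U :=
      { one_smul := fun u => Subtype.ext (by
          show ((1 : Q) : W ≃ₗ[F] W) u.1 = u.1
          simp)
        mul_smul := fun g h u => Subtype.ext (by
          rfl) }
    haveI : Finite W := Module.finite_of_finite F
    haveI : Finite U := Subtype.finite
    -- p divides card U
    obtain ⟨n, hn, hcard⟩ := hq
    have hUrank : 0 < Module.finrank F U := by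
      rw [Module.finrank_pos_iff]
      exact Submodule.nontrivial_iff_ne_bot.2 hU
    have hpU : p ∣ Nat.card U := by
      haveI : Fintype U := Fintype.ofFinite U
      rw [Nat.card_eq_fintype_card, Module.card_eq_pow_finrank (K := F) (V := U), hcard, ← pow_mul]
      exact dvd_pow_self p (by positivity)
    have hmod := hQ.card_modEq_card_fixedPoints U
    have hpfix : p ∣ Nat.card (MulAction.fixedPoints Q U) := by
      exact Nat.modEq_zero_iff_dvd.mp
        (hmod.symm.trans (Nat.modEq_zero_iff_dvd.mpr hpU))
    -- the fixed points are nonempty (0 is fixed) so there are at least p of them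
    have h0fix : (0 : U) ∈ MulAction.fixedPoints Q U := by
      intro g
      exact Subtype.ext (map_zero (g : W ≃ₗ[F] W))
    have hcardfix : 2 ≤ Nat.card (MulAction.fixedPoints Q U) := by
      have hpos : 0 < Nat.card (MulAction.fixedPoints Q U) := by
        rw [Nat.card_pos_iff]
        exact ⟨⟨⟨0, h0fix⟩⟩, Subtype.finite⟩
      calc 2 ≤ p := hp.two_le
      _ ≤ Nat.card (MulAction.fixedPoints Q U) := Nat.le_of_dvd hpos hpfix
    haveI : Nontrivial (MulAction.fixedPoints Q U) := by
      rw [← Finite.one_lt_card_iff_nontrivial]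
      omega
    obtain ⟨⟨⟨u, huU⟩, hufix⟩, hune⟩ :=
      exists_ne (⟨⟨0, U.zero_mem⟩, h0fix⟩ : MulAction.fixedPoints Q U)
    have hu0 : u ≠ 0 := fun h => hune (Subtype.ext (Subtype.ext h))
    have huΦ : u ∈ Φ := by
      intro g hg
      exact congrArg Subtype.val (hufix ⟨g, hg⟩)
    -- Φ ≤ U since Φ is one-dimensional and contains u ∈ U, u ≠ 0
    have hΦU : Φ ≤ U := by
      have hspan : Submodule.span F {(u : W)} ≤ Φ := by
        rw [Submodule.span_singleton_le_iff_mem]; exact huΦ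
      have heq : Submodule.span F {(u : W)} = Φ := by
        apply Submodule.eq_of_le_of_finrank_le hspan
        rw [hfix, finrank_span_singleton hu0]
      rw [← heq, Submodule.span_singleton_le_iff_mem]
      exact huU
    apply Submodule.span_le.2
    rintro w ⟨v, hv, x, hx, rfl⟩
    exact key x hx v (hΦU hv)
end

section
/- Let p be a prime, q a power of p, W a nonzero finite-dimensional vector space over 𝔽_q, and Q ≤ H ≤ GL(W) with Q a finite p-group such that the fixed subspace Φ of Q is one-dimensional; let M_H be the span of all H-translates of Φ. Let ⟨·,·⟩ be a nonzero H-invariant symmetric bilinear form on W (i.e. ⟨u•x, v•x⟩ = ⟨u,v⟩ for all x ∈ H). Then exactly one of the following holds: (i) M_H is isotropic, i.e. M_H ⊆ M_H^⊥; (ii) M_H = W (i.e. H acts irreducibly on W). -/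
open LinearMap (BilinForm)

section

variable {F W : Type*} [Field F] [AddCommGroup W] [Module F W]

lemma apply_mem_closureOfFixed {Q H : Subgroup (W ≃ₗ[F] W)} {x : W ≃ₗ[F] W} (hx : x ∈ H)
    {w : W} (hw : w ∈ closureOfFixed F W Q H) : x w ∈ closureOfFixed F W Q H := by
  have hspan : (closureOfFixed F W Q H).map (x : W →ₗ[F] W) ≤ closureOfFixed F W Q H := by
    rw [closureOfFixed, Submodule.map_span_le]
    rintro _ ⟨v, hv, y, hy, rfl⟩
    exact Submodule.subset_span ⟨v, hv, x * y, mul_mem hx hy, rfl⟩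
  exact hspan ⟨w, hw, rfl⟩

lemma closureOfFixed_le {Q H : Subgroup (W ≃ₗ[F] W)} {N : Submodule F W}
    (hN : ∀ x ∈ H, ∀ w ∈ N, x w ∈ N) (hQN : fixedSubmodule F W Q ≤ N) :
    closureOfFixed F W Q H ≤ N := by
  rw [closureOfFixed, Submodule.span_le]
  rintro _ ⟨v, hv, x, hx, rfl⟩
  exact hN x hx v (hQN hv)

lemma BilinForm.apply_mem_orthogonal {B : BilinForm F W} {x : W ≃ₗ[F] W}
    (hx : ∀ u v, B (x u) (x v) = B u v) {M : Submodule F W} (hM : ∀ m ∈ M, x.symm m ∈ M)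
    {w : W} (hw : w ∈ B.orthogonal M) : x w ∈ B.orthogonal M := by
  intro m hm
  calc B m (x w) = B (x (x.symm m)) (x w) := by rw [x.apply_symm_apply]
    _ = 0 := (hx _ w).trans (hw _ (hM m hm))

lemma BilinForm.orthogonal_ne_bot_of_ne_top [FiniteDimensional F W]
    (B : BilinForm F W) {M : Submodule F W} (hM : M ≠ ⊤) : B.orthogonal M ≠ ⊥ := by
  intro h
  have hdim := B.finrank_add_finrank_orthogonal' M
  rw [h, finrank_bot] at hdim
  have := Submodule.finrank_lt hM
  have := Submodule.finrank_mono (inf_le_left : M ⊓ LinearMap.ker B ≤ M)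
  omega

lemma IsPGroup.not_disjoint_fixedSubmodule {p : ℕ} [Fact p.Prime] [Finite F]
    [FiniteDimensional F W] (hpF : p ∣ Nat.card F) {Q : Subgroup (W ≃ₗ[F] W)}
    (hQ : IsPGroup p Q) {N : Submodule F W} (hN : ∀ g ∈ Q, ∀ w ∈ N, g w ∈ N)
    (hN0 : N ≠ ⊥) : ¬ Disjoint (fixedSubmodule F W Q) N := by
  let S : SubMulAction Q W := ⟨N, fun g w hw => hN g g.2 w hw⟩
  have hpS : p ∣ Nat.card S := by
    have hdim : 0 < Module.finrank F N := Submodule.one_le_finrank_iff.mpr hN0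
    exact (Module.natCard_eq_pow_finrank (K := F) (V := N)) ▸ hpF.trans (dvd_pow_self _ hdim.ne')
  have : Finite S := Module.finite_of_finite F (M := N)
  obtain ⟨w, hw, hw0⟩ := hQ.exists_fixed_point_of_prime_dvd_card_of_fixed_point S hpS
    (a := (0 : N)) fun g => Subtype.ext (smul_zero g)
  have hw_fixed : (w : W) ∈ fixedSubmodule F W Q := fun g hg =>
    congrArg Subtype.val (hw ⟨g, hg⟩)
  rw [Submodule.disjoint_def]
  exact fun h => hw0 (Subtype.ext (h w hw_fixed w.2).symm)

end

theorem closureOfFixed_isotropic_xor_irreducible_general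
    (p : ℕ) (hp : p.Prime) (F : Type*) [Field F] [Fintype F]
    (hq : ∃ n : ℕ, 0 < n ∧ Fintype.card F = p ^ n)
    (W : Type*) [AddCommGroup W] [Module F W] [FiniteDimensional F W]
    (Q H : Subgroup (W ≃ₗ[F] W)) (hQ : IsPGroup p Q) (hQH : Q ≤ H)
    (hfix : Module.finrank F ↥(fixedSubmodule F W Q) = 1)
    (B : W →ₗ[F] W →ₗ[F] F)
    (hB : B ≠ 0)
    (hinv : ∀ x ∈ H, ∀ u v : W, B (x u) (x v) = B u v) :
    Xor' (∀ u ∈ closureOfFixed F W Q H, ∀ v ∈ closureOfFixed F W Q H, B u v = 0)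
      (closureOfFixed F W Q H = ⊤) := by
  have : Fact p.Prime := ⟨hp⟩
  set M := closureOfFixed F W Q H
  have hpF : p ∣ Nat.card F := by
    obtain ⟨n, hn, hcard⟩ := hq
    rw [Nat.card_eq_fintype_card, hcard]
    exact dvd_pow_self p hn.ne'
  set N := BilinForm.orthogonal B M
  have hperp : ∀ x ∈ H, ∀ w ∈ N, x w ∈ N := fun x hx _ =>
    BilinForm.apply_mem_orthogonal (hinv x hx) fun _ => apply_mem_closureOfFixed (inv_mem hx)
  refine (xor_iff_or_and_not_and _ _).mpr ⟨?_, ?_⟩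
  · refine or_iff_not_imp_right.mpr fun hM => ?_
    have hΦ : fixedSubmodule F W Q ≤ N := by
      by_contra hle
      exact hQ.not_disjoint_fixedSubmodule hpF (fun g hg => hperp g (hQH hg))
        (BilinForm.orthogonal_ne_bot_of_ne_top B hM)
        ((Submodule.isAtom_iff_finrank_eq_one.mpr hfix).not_le_iff_disjoint.mp hle)
    exact fun u hu v hv => closureOfFixed_le hperp hΦ hv u hu
  · rintro ⟨hiso, hM⟩
    exact hB (LinearMap.ext₂ fun u v => hiso u (hM ▸ trivial) v (hM ▸ trivial))

/-- If `Q ≤ H ≤ GL(W)` with `Q` a finite `p`-group whose fixed space is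
one-dimensional, and `B` is a nonzero `H`-invariant symmetric bilinear form on `W`,
then exactly one of the following holds: `M_H` is isotropic (`M_H ⊆ M_H^⊥`), or
`M_H = W` (`H` acts irreducibly). -/
theorem closureOfFixed_isotropic_xor_irreducible
    (p : ℕ) (hp : p.Prime) (F : Type*) [Field F] [Fintype F]
    (hq : ∃ n : ℕ, 0 < n ∧ Fintype.card F = p ^ n)
    (W : Type*) [AddCommGroup W] [Module F W] [FiniteDimensional F W] [Nontrivial W]
    (Q H : Subgroup (W ≃ₗ[F] W)) [Finite Q] (hQ : IsPGroup p Q) (hQH : Q ≤ H)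
    (hfix : Module.finrank F ↥(fixedSubmodule F W Q) = 1)
    (B : W →ₗ[F] W →ₗ[F] F)
    (hsymm : ∀ u v : W, B u v = B v u)
    (hB : B ≠ 0)
    (hinv : ∀ x ∈ H, ∀ u v : W, B (x u) (x v) = B u v) :
    Xor' (∀ u ∈ closureOfFixed F W Q H, ∀ v ∈ closureOfFixed F W Q H, B u v = 0)
      (closureOfFixed F W Q H = ⊤) :=
  closureOfFixed_isotropic_xor_irreducible_general p hp F hq W Q H hQ hQH hfix B hB hinv
end

section
/- Let V = {1,2,3,4} × {a,b,c}, and call two elements of V adjacent if they differ in both coordinates. Define a plane to be a 3-element subset of V whose elements are pairwise adjacent, and a maximal flag to be a triple (P, L, F) where F is a plane, L is a 2-element subset of F, and P ∈ L. Then there are exactly 144 maximal flags, and the natural componentwise action of S₄ × S₃ on V induces a simply transitive (sharply transitive) action on the set of maximal flags. -/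
/-- Adjacency in the apartment: two of the 12 points (a "number" in `Fin 4` and a
"letter" in `Fin 3`) are adjacent iff they differ in both coordinates. -/
def apartAdj (u v : Fin 4 × Fin 3) : Prop := u.1 ≠ v.1 ∧ u.2 ≠ v.2

/-- A plane is a 3-element set of pairwise adjacent points. -/
def IsPlane (F : Finset (Fin 4 × Fin 3)) : Prop :=
  F.card = 3 ∧ ∀ u ∈ F, ∀ v ∈ F, u ≠ v → apartAdj u v

/-- A maximal flag: a plane `F`, a 2-element subset `L ⊆ F` (a line), and a point
`P ∈ L`. -/
def IsMaxFlag (P : Fin 4 × Fin 3) (L F : Finset (Fin 4 × Fin 3)) : Prop :=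
  IsPlane F ∧ L ⊆ F ∧ L.card = 2 ∧ P ∈ L

/-- The componentwise action of a pair of permutations on a point. -/
def wAct (w : Equiv.Perm (Fin 4) × Equiv.Perm (Fin 3)) (u : Fin 4 × Fin 3) :
    Fin 4 × Fin 3 :=
  (w.1 u.1, w.2 u.2)

set_option maxHeartbeats 4000000 in
set_option synthInstance.maxHeartbeats 1000000 in
set_option synthInstance.maxSize 1000 in
lemma B1ex : ∀ a b c a' b' c' : Fin 4, a ≠ b → a ≠ c → b ≠ c → a' ≠ b' → a' ≠ c' → b' ≠ c' →
    ∃ π : Equiv.Perm (Fin 4), π a = a' ∧ π b = b' ∧ π c = c' := by decide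

set_option maxHeartbeats 4000000 in
set_option synthInstance.maxHeartbeats 1000000 in
set_option synthInstance.maxSize 1000 in
lemma B1u : ∀ π τ : Equiv.Perm (Fin 4), ∀ a b c : Fin 4, a ≠ b → a ≠ c → b ≠ c →
    π a = τ a → π b = τ b → π c = τ c → π = τ := by decide

set_option maxHeartbeats 1000000 in
set_option synthInstance.maxHeartbeats 1000000 in
set_option synthInstance.maxSize 1000 in
lemma B2ex : ∀ a b c a' b' c' : Fin 3, a ≠ b → a ≠ c → b ≠ c → a' ≠ b' → a' ≠ c' → b' ≠ c' →
    ∃ σ : Equiv.Perm (Fin 3), σ a = a' ∧ σ b = b' ∧ σ c = c' := by decide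

set_option maxHeartbeats 1000000 in
set_option synthInstance.maxHeartbeats 1000000 in
set_option synthInstance.maxSize 1000 in
lemma B2u : ∀ σ τ : Equiv.Perm (Fin 3), ∀ a b c : Fin 3, a ≠ b → a ≠ c → b ≠ c →
    σ a = τ a → σ b = τ b → σ c = τ c → σ = τ := by decide

lemma adjNe {u v : Fin 4 × Fin 3} (h : apartAdj u v) : u ≠ v :=
  fun e => h.1 (by rw [e])

lemma wAct_injective (w : Equiv.Perm (Fin 4) × Equiv.Perm (Fin 3)) :
    Function.Injective (wAct w) := by
  rintro ⟨a, b⟩ ⟨c, d⟩ h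
  simp only [wAct, Prod.mk.injEq] at h
  exact Prod.ext_iff.mpr ⟨w.1.injective h.1, w.2.injective h.2⟩

lemma adj_map (w : Equiv.Perm (Fin 4) × Equiv.Perm (Fin 3)) {u v : Fin 4 × Fin 3}
    (h : apartAdj u v) : apartAdj (wAct w u) (wAct w v) :=
  ⟨fun e => h.1 (w.1.injective e), fun e => h.2 (w.2.injective e)⟩

/-- Every maximal flag has the canonical form `(P, {P,q}, {P,q,r})`. -/
lemma flagForm {P : Fin 4 × Fin 3} {L F : Finset (Fin 4 × Fin 3)}
    (h : IsMaxFlag P L F) :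
    ∃ q r, apartAdj P q ∧ apartAdj P r ∧ apartAdj q r ∧ L = {P, q} ∧ F = {P, q, r} := by
  obtain ⟨⟨hF3, hadj⟩, hLF, hL2, hPL⟩ := h
  obtain ⟨x, y, hxy, hLxy⟩ := Finset.card_eq_two.mp hL2
  have hq : ∃ q, q ≠ P ∧ L = {P, q} := by
    have hP : P = x ∨ P = y := by rw [hLxy] at hPL; simpa using hPL
    rcases hP with h1 | h1
    · exact ⟨y, by rw [h1]; exact hxy.symm, by rw [hLxy, h1]⟩
    · exact ⟨x, by rw [h1]; exact hxy, by rw [hLxy, h1, Finset.pair_comm]⟩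
  obtain ⟨q, hqP, hL⟩ := hq
  have hsd : (F \ L).card = 1 := by
    rw [Finset.card_sdiff_of_subset hLF, hF3, hL2]
  obtain ⟨r, hr⟩ := Finset.card_eq_one.mp hsd
  have hrF : r ∈ F := by
    have : r ∈ F \ L := by rw [hr]; exact Finset.mem_singleton_self r
    exact (Finset.mem_sdiff.mp this).1
  have hrL : r ∉ L := by
    have : r ∈ F \ L := by rw [hr]; exact Finset.mem_singleton_self r
    exact (Finset.mem_sdiff.mp this).2
  have hPF : P ∈ F := hLF hPL
  have hqL : q ∈ L := by rw [hL]; simp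
  have hqF : q ∈ F := hLF hqL
  have hrP : P ≠ r := fun e => hrL (e ▸ hPL)
  have hrq : q ≠ r := fun e => hrL (e ▸ hqL)
  refine ⟨q, r, hadj P hPF q hqF hqP.symm, hadj P hPF r hrF hrP,
    hadj q hqF r hrF hrq, hL, ?_⟩
  have : F = L ∪ (F \ L) := (Finset.union_sdiff_of_subset hLF).symm
  rw [this, hr, hL]
  ext z
  simp only [Finset.mem_union, Finset.mem_insert, Finset.mem_singleton]
  tauto

/-- Conversely, the canonical form always gives a maximal flag. -/
lemma flagForm' {P q r : Fin 4 × Fin 3}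
    (hPq : apartAdj P q) (hPr : apartAdj P r) (hqr : apartAdj q r) :
    IsMaxFlag P {P, q} {P, q, r} := by
  have hPq' := adjNe hPq
  have hPr' := adjNe hPr
  have hqr' := adjNe hqr
  have hadjsymm : ∀ u v, apartAdj u v → apartAdj v u := fun u v h => ⟨h.1.symm, h.2.symm⟩
  refine ⟨⟨?_, ?_⟩, ?_, ?_, by simp⟩
  · rw [Finset.card_insert_of_notMem (by simp [hPq', hPr']),
      Finset.card_insert_of_notMem (by simp [hqr'])]
    simp
  · intro u hu v hv huv
    simp only [Finset.mem_insert, Finset.mem_singleton] at hu hv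
    rcases hu with rfl | rfl | rfl <;> rcases hv with rfl | rfl | rfl <;>
      first
        | exact absurd rfl huv
        | assumption
        | exact hadjsymm _ _ (by assumption)
  · intro z hz
    simp only [Finset.mem_insert, Finset.mem_singleton] at hz ⊢
    tauto
  · rw [Finset.card_insert_of_notMem (by simp [hPq'])]; simp

/-- Sharp transitivity: this is exactly the second conjunct of the theorem. -/
lemma transFree :
    ∀ t s : (Fin 4 × Fin 3) × Finset (Fin 4 × Fin 3) × Finset (Fin 4 × Fin 3),
      IsMaxFlag t.1 t.2.1 t.2.2 → IsMaxFlag s.1 s.2.1 s.2.2 →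
      ∃! w : Equiv.Perm (Fin 4) × Equiv.Perm (Fin 3),
        wAct w t.1 = s.1 ∧ t.2.1.image (wAct w) = s.2.1 ∧
          t.2.2.image (wAct w) = s.2.2 := by
  intro t s ht hs
  obtain ⟨q, r, hPq, hPr, hqr, hL, hF⟩ := flagForm ht
  obtain ⟨q', r', hPq', hPr', hqr', hL', hF'⟩ := flagForm hs
  obtain ⟨π, hπ1, hπ2, hπ3⟩ := B1ex t.1.1 q.1 r.1 s.1.1 q'.1 r'.1
    hPq.1 hPr.1 hqr.1 hPq'.1 hPr'.1 hqr'.1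
  obtain ⟨σ, hσ1, hσ2, hσ3⟩ := B2ex t.1.2 q.2 r.2 s.1.2 q'.2 r'.2
    hPq.2 hPr.2 hqr.2 hPq'.2 hPr'.2 hqr'.2
  have hwP : wAct (π, σ) t.1 = s.1 := Prod.ext_iff.mpr ⟨hπ1, hσ1⟩
  have hwq : wAct (π, σ) q = q' := Prod.ext_iff.mpr ⟨hπ2, hσ2⟩
  have hwr : wAct (π, σ) r = r' := Prod.ext_iff.mpr ⟨hπ3, hσ3⟩
  refine ⟨(π, σ), ⟨hwP, ?_, ?_⟩, ?_⟩
  · rw [hL, hL']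
    rw [Finset.image_insert, Finset.image_singleton, hwP, hwq]
  · rw [hF, hF']
    rw [Finset.image_insert, Finset.image_insert, Finset.image_singleton, hwP, hwq, hwr]
  · rintro w' ⟨h1, h2, h3⟩
    have hinj := wAct_injective w'
    have hq'' : wAct w' q = q' := by
      have hmem : wAct w' q ∈ s.2.1 := by
        rw [← h2]; exact Finset.mem_image_of_mem _ (by rw [hL]; simp)
      rw [hL'] at hmem
      simp only [Finset.mem_insert, Finset.mem_singleton] at hmem
      rcases hmem with h | h
      · exact absurd (hinj (h1.trans h.symm)) (adjNe hPq)
      · exact h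
    have hr'' : wAct w' r = r' := by
      have hmem : wAct w' r ∈ s.2.2 := by
        rw [← h3]; exact Finset.mem_image_of_mem _ (by rw [hF]; simp)
      rw [hF'] at hmem
      simp only [Finset.mem_insert, Finset.mem_singleton] at hmem
      rcases hmem with h | h | h
      · exact absurd (hinj (h1.trans h.symm)) (adjNe hPr)
      · exact absurd (hinj (hq''.trans h.symm)) (adjNe hqr)
      · exact h
    have e1 : w'.1 = π := by
      refine B1u w'.1 π t.1.1 q.1 r.1 hPq.1 hPr.1 hqr.1 ?_ ?_ ?_
      · rw [hπ1]; exact congrArg Prod.fst h1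
      · rw [hπ2]; exact congrArg Prod.fst hq''
      · rw [hπ3]; exact congrArg Prod.fst hr''
    have e2 : w'.2 = σ := by
      refine B2u w'.2 σ t.1.2 q.2 r.2 hPq.2 hPr.2 hqr.2 ?_ ?_ ?_
      · rw [hσ1]; exact congrArg Prod.snd h1
      · rw [hσ2]; exact congrArg Prod.snd hq''
      · rw [hσ3]; exact congrArg Prod.snd hr''
    exact Prod.ext_iff.mpr ⟨e1, e2⟩

/-- The action maps maximal flags to maximal flags. -/
lemma flag_image (w : Equiv.Perm (Fin 4) × Equiv.Perm (Fin 3))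
    {P : Fin 4 × Fin 3} {L F : Finset (Fin 4 × Fin 3)} (h : IsMaxFlag P L F) :
    IsMaxFlag (wAct w P) (L.image (wAct w)) (F.image (wAct w)) := by
  obtain ⟨q, r, hPq, hPr, hqr, hL, hF⟩ := flagForm h
  rw [hL, hF, Finset.image_insert, Finset.image_insert, Finset.image_insert,
    Finset.image_singleton, Finset.image_singleton]
  exact flagForm' (adj_map w hPq) (adj_map w hPr) (adj_map w hqr)

/-- The base flag. -/
def t0 : (Fin 4 × Fin 3) × Finset (Fin 4 × Fin 3) × Finset (Fin 4 × Fin 3) :=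
  (((0 : Fin 4), (0 : Fin 3)),
   {((0 : Fin 4), (0 : Fin 3)), ((1 : Fin 4), (1 : Fin 3))},
   {((0 : Fin 4), (0 : Fin 3)), ((1 : Fin 4), (1 : Fin 3)), ((2 : Fin 4), (2 : Fin 3))})

set_option synthInstance.maxSize 1000 in
lemma ht0 : IsMaxFlag t0.1 t0.2.1 t0.2.2 := by
  unfold t0 IsMaxFlag IsPlane apartAdj; decide

/-- There are exactly `144` maximal flags, and the natural componentwise action of
`S₄ × S₃` on the points induces a sharply transitive action on the maximal
flags. -/
theorem card_maxFlags_and_sharply_transitive :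
    Nat.card {t : (Fin 4 × Fin 3) × Finset (Fin 4 × Fin 3) × Finset (Fin 4 × Fin 3) //
        IsMaxFlag t.1 t.2.1 t.2.2} = 144 ∧
    (∀ t s : (Fin 4 × Fin 3) × Finset (Fin 4 × Fin 3) × Finset (Fin 4 × Fin 3),
      IsMaxFlag t.1 t.2.1 t.2.2 → IsMaxFlag s.1 s.2.1 s.2.2 →
      ∃! w : Equiv.Perm (Fin 4) × Equiv.Perm (Fin 3),
        wAct w t.1 = s.1 ∧ t.2.1.image (wAct w) = s.2.1 ∧
          t.2.2.image (wAct w) = s.2.2) := by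
  constructor
  · have hbij : Function.Bijective
        (fun w : Equiv.Perm (Fin 4) × Equiv.Perm (Fin 3) =>
          (⟨(wAct w t0.1, t0.2.1.image (wAct w), t0.2.2.image (wAct w)),
            flag_image w ht0⟩ :
            {t : (Fin 4 × Fin 3) × Finset (Fin 4 × Fin 3) × Finset (Fin 4 × Fin 3) //
              IsMaxFlag t.1 t.2.1 t.2.2})) := by
      constructor
      · intro w w' h
        simp only [Subtype.mk.injEq, Prod.mk.injEq] at h
        obtain ⟨u, hu, huniq⟩ := transFree t0
          (wAct w t0.1, t0.2.1.image (wAct w), t0.2.2.image (wAct w))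
          ht0 (flag_image w ht0)
        have h1 : wAct w t0.1 = wAct w t0.1 ∧
            t0.2.1.image (wAct w) = t0.2.1.image (wAct w) ∧
            t0.2.2.image (wAct w) = t0.2.2.image (wAct w) := ⟨rfl, rfl, rfl⟩
        have h2 : wAct w' t0.1 = wAct w t0.1 ∧
            t0.2.1.image (wAct w') = t0.2.1.image (wAct w) ∧
            t0.2.2.image (wAct w') = t0.2.2.image (wAct w) :=
          ⟨h.1.symm, h.2.1.symm, h.2.2.symm⟩
        exact (huniq w h1).trans (huniq w' h2).symm
      · rintro ⟨s, hsflag⟩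
        obtain ⟨w, ⟨h1, h2, h3⟩, -⟩ := transFree t0 s ht0 hsflag
        exact ⟨w, Subtype.ext (Prod.ext_iff.mpr ⟨h1, Prod.ext_iff.mpr ⟨h2, h3⟩⟩)⟩
    rw [← Nat.card_congr (Equiv.ofBijective _ hbij)]
    simp only [Nat.card_eq_fintype_card, Fintype.card_prod, Fintype.card_perm,
      Fintype.card_fin]
    norm_num [Nat.factorial]
  · exact transFree
end

section
/- The two matrices λ* = [[1,0,0],[0,1,0],[0,1,1]] and μ* = [[1,0,0],[0,1,3],[0,0,1]] over 𝔽₅ generate a subgroup of SL₃(𝔽₅) that is isomorphic to SL₂(𝔽₅) (a group of order 120). -/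
/-!
`A ↦ diag(1, A)` embeds `SL₂(R)` into `SL₃(R)` and sends elementary transvections to elementary
transvections; `λ*` and `μ*` are the images of the transvections `E₁₀(1)` and `E₀₁(3)` of
`SL₂(𝔽₅)`. Over `𝔽_p` a nontrivial transvection generates its whole root subgroup, and `SL₂` of a
field is generated by its elementary transvections, so `λ*` and `μ*` generate the image of the
embedding, a copy of `SL₂(𝔽₅)`. Its order follows from `|SL₂(𝔽₅)| · |𝔽₅ˣ| = |GL₂(𝔽₅)| = 24 · 20`.
-/

open Matrix MatrixGroups

namespace Matrix.SpecialLinearGroup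

section BlockEmbedding

variable {m n R : Type*} [Fintype m] [DecidableEq m] [Fintype n] [DecidableEq n] [CommRing R]

def reindexMulEquiv (e : m ≃ n) : SpecialLinearGroup m R ≃* SpecialLinearGroup n R where
  toFun A := ⟨Matrix.reindex e e A, by rw [det_reindex_self, A.2]⟩
  invFun A := ⟨Matrix.reindex e.symm e.symm A, by rw [det_reindex_self, A.2]⟩
  left_inv A := Subtype.ext (by simp)
  right_inv A := Subtype.ext (by simp)
  map_mul' A B := Subtype.ext (submatrix_mul_equiv _ _ _ _ _).symm

@[simp]
lemma coe_reindexMulEquiv (e : m ≃ n) (A : SpecialLinearGroup m R) :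
    (reindexMulEquiv e A : Matrix n n R) = Matrix.reindex e e A :=
  rfl

lemma reindexMulEquiv_transvection (e : m ≃ n) {i j : m} (hij : i ≠ j) (c : R) :
    reindexMulEquiv e (transvection hij c) = transvection (e.injective.ne hij) c :=
  Subtype.ext (by simp [transvection_coe, reindex_apply, submatrix_add])

def fromBlocksOne : SpecialLinearGroup n R →* SpecialLinearGroup (m ⊕ n) R where
  toFun A := ⟨fromBlocks 1 0 0 A, by rw [det_fromBlocks_zero₂₁, det_one, one_mul, A.2]⟩
  map_one' := Subtype.ext fromBlocks_one
  map_mul' A B := Subtype.ext <| by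
    change _ = fromBlocks 1 0 0 (A : Matrix n n R) * fromBlocks 1 0 0 (B : Matrix n n R)
    simp [fromBlocks_multiply]

@[simp]
lemma coe_fromBlocksOne (A : SpecialLinearGroup n R) :
    (fromBlocksOne (m := m) A : Matrix (m ⊕ n) (m ⊕ n) R) = fromBlocks 1 0 0 A :=
  rfl

lemma fromBlocksOne_injective :
    Function.Injective (fromBlocksOne : SpecialLinearGroup n R → SpecialLinearGroup (m ⊕ n) R) :=
  fun _ _ h => Subtype.ext (fromBlocks_inj.1 (congrArg Subtype.val h)).2.2.2

lemma fromBlocksOne_transvection {i j : n} (hij : i ≠ j) (c : R) :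
    (fromBlocksOne (transvection hij c) : SpecialLinearGroup (m ⊕ n) R) =
      transvection (Sum.inr_injective.ne hij) c := by
  ext (a | a) (b | b) <;> simp [transvection_coe, one_apply, single_apply]

end BlockEmbedding

section FinEmbedding

variable {R : Type*} [CommRing R]

def fromBlocksOneFin (m : ℕ) {n : ℕ} :
    SpecialLinearGroup (Fin n) R →* SpecialLinearGroup (Fin (m + n)) R :=
  (reindexMulEquiv finSumFinEquiv).toMonoidHom.comp fromBlocksOne

lemma fromBlocksOneFin_injective (m n : ℕ) :
    Function.Injective (fromBlocksOneFin m : SpecialLinearGroup (Fin n) R →* _) :=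
  (reindexMulEquiv _).injective.comp fromBlocksOne_injective

lemma fromBlocksOneFin_transvection (m : ℕ) {n : ℕ} {i j : Fin n} (hij : i ≠ j) (c : R) :
    fromBlocksOneFin m (transvection hij c) =
      transvection ((finSumFinEquiv.injective.comp Sum.inr_injective).ne hij) c := by
  simp [fromBlocksOneFin, fromBlocksOne_transvection, reindexMulEquiv_transvection]

end FinEmbedding

section Transvection

variable {n R : Type*} [Fintype n] [DecidableEq n] [CommRing R]

lemma transvection_pow {i j : n} (hij : i ≠ j) (c : R) (k : ℕ) :
    transvection hij c ^ k = transvection hij (k • c) := by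
  induction k with
  | zero => simp
  | succ k ih => rw [pow_succ, ih, ← transvection_add, succ_nsmul]

lemma transvection_mem_closure_singleton {p : ℕ} [Fact p.Prime] {i j : n} (hij : i ≠ j)
    {a : ZMod p} (ha : a ≠ 0) (c : ZMod p) :
    transvection hij c ∈ Subgroup.closure {transvection hij a} := by
  have hc : (c / a).val • a = c := by
    rw [nsmul_eq_mul, ZMod.natCast_zmod_val, div_mul_cancel₀ c ha]
  rw [← hc, ← transvection_pow]
  exact pow_mem (Subgroup.subset_closure (Set.mem_singleton _)) _

end Transvection

theorem closure_transvection_pair_eq_top {p : ℕ} [Fact p.Prime] {a b : ZMod p}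
    (ha : a ≠ 0) (hb : b ≠ 0) :
    Subgroup.closure {transvection (one_ne_zero : (1 : Fin 2) ≠ 0) a,
      transvection (zero_ne_one : (0 : Fin 2) ≠ 1) b} = ⊤ := by
  refine eq_top_iff.2 fun A _ => SL2.transvection_induction (· ∈ Subgroup.closure _)
    (fun i j hij c => ?_) (fun _ _ => mul_mem) A
  obtain ⟨rfl, rfl⟩ | ⟨rfl, rfl⟩ : i = 0 ∧ j = 1 ∨ i = 1 ∧ j = 0 := by omega
  · exact Subgroup.closure_mono (Set.subset_insert _ _)
      (transvection_mem_closure_singleton hij hb c)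
  · exact Subgroup.closure_mono (Set.singleton_subset_iff.2 (Set.mem_insert _ _))
      (transvection_mem_closure_singleton hij ha c)

theorem closure_transvection_pair_eq_range_fromBlocksOneFin {p : ℕ} [Fact p.Prime]
    {a b : ZMod p} (ha : a ≠ 0) (hb : b ≠ 0) :
    Subgroup.closure {transvection (by decide : (2 : Fin 3) ≠ 1) a,
      transvection (by decide : (1 : Fin 3) ≠ 2) b} = (fromBlocksOneFin 1 (n := 2)).range := by
  rw [MonoidHom.range_eq_map, ← closure_transvection_pair_eq_top ha hb, MonoidHom.map_closure,
    Set.image_pair, fromBlocksOneFin_transvection, fromBlocksOneFin_transvection]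
  -- `finSumFinEquiv (Sum.inr i)` reduces to `i + 1`
  rfl

theorem card_mul_card_units (ι R : Type*) [Fintype ι] [DecidableEq ι] [Nonempty ι] [CommRing R] :
    Nat.card (SpecialLinearGroup ι R) * Nat.card Rˣ = Nat.card (GL ι R) := by
  have hrange : (toGL : SpecialLinearGroup ι R →* GL ι R).range = GeneralLinearGroup.det.ker :=
    SetLike.coe_injective (by rw [MonoidHom.coe_range, MonoidHom.coe_ker, range_toGL])
  rw [Nat.card_congr ((MonoidHom.ofInjective toGL_injective).trans
      (MulEquiv.subgroupCongr hrange)).toEquiv, ← Subgroup.card_top (G := Rˣ),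
    ← MonoidHom.range_eq_top.2 (GeneralLinearGroup.det_surjective (n := ι)),
    ← Subgroup.index_ker, Subgroup.card_mul_index]

end Matrix.SpecialLinearGroup

open Matrix.SpecialLinearGroup in
/-- The two matrices `λ* = [[1,0,0],[0,1,0],[0,1,1]]` and
`μ* = [[1,0,0],[0,1,3],[0,0,1]]` generate a subgroup of `SL₃(𝔽₅)` isomorphic to
`SL₂(𝔽₅)`, a group of order `120`. -/
theorem quartet_generators_give_SL2 :
    Nonempty (↥(Subgroup.closure {A : Matrix.SpecialLinearGroup (Fin 3) (ZMod 5) |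
        (A : Matrix (Fin 3) (Fin 3) (ZMod 5)) = !![1, 0, 0; 0, 1, 0; 0, 1, 1] ∨
        (A : Matrix (Fin 3) (Fin 3) (ZMod 5)) = !![1, 0, 0; 0, 1, 3; 0, 0, 1]}) ≃*
      Matrix.SpecialLinearGroup (Fin 2) (ZMod 5)) ∧
    Nat.card (Matrix.SpecialLinearGroup (Fin 2) (ZMod 5)) = 120 := by
  have hlambda : ((transvection (by decide : (2 : Fin 3) ≠ 1) 1 : SL(3, ZMod 5)) :
      Matrix (Fin 3) (Fin 3) (ZMod 5)) = !![1, 0, 0; 0, 1, 0; 0, 1, 1] := by decide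
  have hmu : ((transvection (by decide : (1 : Fin 3) ≠ 2) 3 : SL(3, ZMod 5)) :
      Matrix (Fin 3) (Fin 3) (ZMod 5)) = !![1, 0, 0; 0, 1, 3; 0, 0, 1] := by decide
  have h3 : (3 : ZMod 5) ≠ 0 := by decide
  have : Fact (Nat.Prime 5) := ⟨Nat.prime_five⟩
  have hgens : {A : SL(3, ZMod 5) |
      (A : Matrix (Fin 3) (Fin 3) (ZMod 5)) = !![1, 0, 0; 0, 1, 0; 0, 1, 1] ∨
      (A : Matrix (Fin 3) (Fin 3) (ZMod 5)) = !![1, 0, 0; 0, 1, 3; 0, 0, 1]} =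
      {transvection (by decide : (2 : Fin 3) ≠ 1) 1,
        transvection (by decide : (1 : Fin 3) ≠ 2) 3} :=
    Set.ext fun A => or_congr (hlambda ▸ Subtype.coe_injective.eq_iff)
      (hmu ▸ Subtype.coe_injective.eq_iff)
  rw [hgens, closure_transvection_pair_eq_range_fromBlocksOneFin one_ne_zero h3]
  refine ⟨⟨(MonoidHom.ofInjective (fromBlocksOneFin_injective 1 2)).symm⟩, ?_⟩
  have hcard := card_mul_card_units (Fin 2) (ZMod 5)
  rw [card_GL_field, Nat.card_units, Nat.card_zmod, ZMod.card] at hcard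
  norm_num [Fin.prod_univ_two, -Nat.card_eq_fintype_card] at hcard
  omega
end

section
/- Let i ∈ 𝔽₉ satisfy i² = −1, and define the matrices h₁ = [[0,1],[−1,−1]], h₂ = [[0,−1],[1,−1]], h₃ = [[−1,i],[i,0]], h₄ = [[−1,−i],[−i,0]] in SL₂(𝔽₉). Then each h_k has order 3, for all k ≠ l the element (h_k·h_l)² equals the central involution −1 (in particular all (h_k h_l)², k ≠ l, are equal), and ⟨h₁, h₂, h₃, h₄⟩ = SL₂(𝔽₉). (These are Moore's defining relations for the Schur double cover 2·A₆ ≅ SL₂(9).) -/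
/-!
For `A ∈ SL₂`, Cayley–Hamilton reads `A² = (tr A) A - 1`. Each `hₖ` has trace `-1`,
hence `hₖ² + hₖ + 1 = 0` and `hₖ³ = 1`; each product `hₖ hₗ` with `k ≠ l` has trace `0`
once `3 = 0` and `i² = -1`, hence `(hₖ hₗ)² = -1`.

For generation, the elementary transvections with entry `1` or `i` are conjugates of
the `hₖ` by other `hₖ`. Since `1` and `i` generate `𝔽₉` additively (by Lagrange, as the
subgroup they generate has at least the four elements `0, ±1, i`), every transvection
lies in `⟨h₁, …, h₄⟩`, and transvections generate `SL₂` of a field.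
-/

open Matrix
open scoped MatrixGroups

namespace Matrix.SpecialLinearGroup

variable {R : Type*} [CommRing R]

theorem sq_coe_eq_trace_smul_sub_one (A : SL(2, R)) :
    (A : Matrix (Fin 2) (Fin 2) R) ^ 2 =
      trace (A : Matrix (Fin 2) (Fin 2) R) • (A : Matrix (Fin 2) (Fin 2) R) - 1 := by
  have hdet := A.det_coe
  rw [det_fin_two] at hdet
  ext a b
  fin_cases a <;> fin_cases b <;> simp [sq, mul_apply, trace_fin_two] <;> grind

theorem coe_sq_eq_neg_one_of_trace_eq_zero (A : SL(2, R))
    (hA : trace (A : Matrix (Fin 2) (Fin 2) R) = 0) :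
    ((A ^ 2 : SL(2, R)) : Matrix (Fin 2) (Fin 2) R) = -1 := by
  rw [coe_pow, sq_coe_eq_trace_smul_sub_one, hA, zero_smul, zero_sub]

theorem pow_three_eq_one_of_trace_eq_neg_one (A : SL(2, R))
    (hA : trace (A : Matrix (Fin 2) (Fin 2) R) = -1) :
    A ^ 3 = 1 := by
  have hsq := sq_coe_eq_trace_smul_sub_one A
  rw [hA, neg_one_smul] at hsq
  apply Subtype.ext
  rw [coe_pow, coe_one, pow_succ, hsq]
  calc (-(A : Matrix (Fin 2) (Fin 2) R) - 1) * A = -(A ^ 2) - A := by noncomm_ring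
    _ = 1 := by rw [hsq]; abel

variable {ι : Type*} [DecidableEq ι] [Fintype ι]

theorem transvection_mem_of_mem_addSubgroupClosure {G : Subgroup (SpecialLinearGroup ι R)}
    {i j : ι} (hij : i ≠ j) {S : Set R} (hS : ∀ c ∈ S, transvection hij c ∈ G) {c : R}
    (hc : c ∈ AddSubgroup.closure S) : transvection hij c ∈ G := by
  induction hc using AddSubgroup.closure_induction with
  | mem c hc => exact hS c hc
  | zero => simp [G.one_mem]
  | add a b _ _ ha hb => rw [transvection_add]; exact G.mul_mem ha hb
  | neg a _ ha => rw [← transvection_inv]; exact G.inv_mem ha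

theorem SL2_eq_top_of_transvection_mem {F : Type*} [Field F] {G : Subgroup SL(2, F)} {S : Set F}
    (hS : AddSubgroup.closure S = ⊤)
    (hG : ∀ (i j : Fin 2) (hij : i ≠ j), ∀ c ∈ S, transvection hij c ∈ G) : G = ⊤ :=
  eq_top_iff.mpr fun A _ ↦ SL2.transvection_induction (· ∈ G)
    (fun i j hij c ↦ transvection_mem_of_mem_addSubgroupClosure hij (hG i j hij)
      (hS ▸ AddSubgroup.mem_top c))
    (fun _ _ ↦ G.mul_mem) A

end Matrix.SpecialLinearGroup

section FieldOfOrderNine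

variable {F : Type*} [Field F] [Fintype F]

theorem three_eq_zero_of_card_eq_nine (hF : Fintype.card F = 9) : (3 : F) = 0 := by
  have h9 : (3 * 3 : F) = 0 := by exact_mod_cast hF ▸ FiniteField.cast_card_eq_zero F
  exact mul_self_eq_zero.mp h9

theorem addSubgroupClosure_one_sqrt_neg_one_eq_top (hF : Fintype.card F = 9) {i : F}
    (hi : i ^ 2 = -1) :
    AddSubgroup.closure {1, i} = ⊤ := by
  have h3 := three_eq_zero_of_card_eq_nine hF
  set S := AddSubgroup.closure ({1, i} : Set F)
  have h1S : (1 : F) ∈ S := AddSubgroup.subset_closure (by simp)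
  have hiS : i ∈ S := AddSubgroup.subset_closure (by simp)
  have hsub : ({0, 1, -1, i} : Set F) ⊆ S := by
    simp [Set.insert_subset_iff, S.zero_mem, h1S, S.neg_mem h1S, hiS]
  have hcard4 : ({0, 1, -1, i} : Set F).ncard = 4 := by
    have h1 : (1 : F) ≠ -1 := fun e ↦ one_ne_zero (by linear_combination h3 - e : (1 : F) = 0)
    have hi0 : i ≠ 0 := by rintro rfl; norm_num at hi
    have hi1 : i ^ 2 ≠ 1 := fun e ↦ h1 (e ▸ hi)
    rw [Set.ncard_insert_of_notMem, Set.ncard_insert_of_notMem, Set.ncard_pair]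
    all_goals grind
  have hle : 4 ≤ Nat.card S := by
    rw [← hcard4, ← SetLike.coe_sort_coe, Nat.card_coe_set_eq]
    exact Set.ncard_le_ncard hsub
  have hdvd : Nat.card S ∣ 3 ^ 2 := by
    rw [show 3 ^ 2 = Nat.card F by simp [hF]]
    exact S.card_addSubgroup_dvd_card
  obtain ⟨m, hm, hmS⟩ := (Nat.dvd_prime_pow Nat.prime_three).mp hdvd
  apply S.eq_top_of_card_eq
  interval_cases m <;> simp_all

end FieldOfOrderNine

section Moore

variable {R : Type*} [CommRing R] (i : R)

def mooreMatrix : Fin 4 → Matrix (Fin 2) (Fin 2) R :=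
  ![!![0, 1; -1, -1], !![0, -1; 1, -1], !![-1, i; i, 0], !![-1, -i; -i, 0]]

theorem trace_mooreMatrix (k : Fin 4) : trace (mooreMatrix i k) = -1 := by
  fin_cases k <;> simp [mooreMatrix, trace_fin_two]

variable {i}

theorem trace_mooreMatrix_mul (h3 : (3 : R) = 0) (hi : i ^ 2 = -1) {k l : Fin 4} (hkl : k ≠ l) :
    trace (mooreMatrix i k * mooreMatrix i l) = 0 := by
  fin_cases k <;> fin_cases l <;> simp [mooreMatrix, trace_fin_two] at hkl ⊢ <;> grind

theorem mooreMatrix_ne_one [Nontrivial R] (hi : i ^ 2 = -1) (k : Fin 4) :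
    mooreMatrix i k ≠ 1 := by
  have hi0 : i ≠ 0 := by rintro rfl; norm_num at hi
  intro e
  fin_cases k <;> simpa [mooreMatrix, hi0] using congr_fun₂ e 0 1

theorem moore_transvection_relations {h : Fin 4 → SL(2, R)}
    (hh : ∀ k, (h k : Matrix (Fin 2) (Fin 2) R) = mooreMatrix i k) (h3 : (3 : R) = 0)
    (hi : i ^ 2 = -1) :
    SpecialLinearGroup.transvection zero_ne_one 1 * h 1 = h 1 * h 0 ∧
    h 3 * SpecialLinearGroup.transvection zero_ne_one i = h 2 * h 3 ∧
    h 0 * SpecialLinearGroup.transvection one_ne_zero 1 = h 1 * h 0 ∧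
    SpecialLinearGroup.transvection one_ne_zero i * h 3 = h 3 * h 2 := by
  refine ⟨?_, ?_, ?_, ?_⟩ <;> ext a b <;> fin_cases a <;> fin_cases b <;>
    simp [hh, mooreMatrix, SpecialLinearGroup.transvection_coe, mul_apply, Fin.sum_univ_two,
      Matrix.single] <;> grind

theorem transvection_mem_closure_mooreMatrix {h : Fin 4 → SL(2, R)}
    (hh : ∀ k, (h k : Matrix (Fin 2) (Fin 2) R) = mooreMatrix i k) (h3 : (3 : R) = 0)
    (hi : i ^ 2 = -1) {a b : Fin 2} (hab : a ≠ b) {c : R} (hc : c ∈ ({1, i} : Set R)) :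
    SpecialLinearGroup.transvection hab c ∈ Subgroup.closure (Set.range h) := by
  set G := Subgroup.closure (Set.range h)
  have mem (k : Fin 4) : h k ∈ G := Subgroup.subset_closure ⟨k, rfl⟩
  obtain ⟨hU1, hUi, hL1, hLi⟩ := moore_transvection_relations hh h3 hi
  fin_cases a <;> fin_cases b <;> try exact absurd rfl hab
  all_goals obtain rfl | rfl := hc
  · exact (G.mul_mem_cancel_right (mem 1)).mp (hU1 ▸ mul_mem (mem 1) (mem 0))
  · exact (G.mul_mem_cancel_left (mem 3)).mp (hUi ▸ mul_mem (mem 2) (mem 3))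
  · exact (G.mul_mem_cancel_left (mem 0)).mp (hL1 ▸ mul_mem (mem 1) (mem 0))
  · exact (G.mul_mem_cancel_right (mem 3)).mp (hLi ▸ mul_mem (mem 3) (mem 2))

end Moore

/-- Moore's presentation of `2·A₆ ≅ SL₂(9)`: in a field `F` with `9` elements
containing `i` with `i² = −1`, the four matrices
`h₁ = [[0,1],[−1,−1]]`, `h₂ = [[0,−1],[1,−1]]`, `h₃ = [[−1,i],[i,0]]`,
`h₄ = [[−1,−i],[−i,0]]` of `SL₂(𝔽₉)` each have order `3`, all products
`(h_k·h_l)²` with `k ≠ l` equal the central involution `−1`, and the four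
matrices generate all of `SL₂(𝔽₉)`. -/
theorem moore_relations_SL2_F9
    (F : Type*) [Field F] [Fintype F] (hF : Fintype.card F = 9)
    (i : F) (hi : i ^ 2 = -1)
    (h : Fin 4 → Matrix.SpecialLinearGroup (Fin 2) F)
    (h1 : (h 0 : Matrix (Fin 2) (Fin 2) F) = !![0, 1; -1, -1])
    (h2 : (h 1 : Matrix (Fin 2) (Fin 2) F) = !![0, -1; 1, -1])
    (h3 : (h 2 : Matrix (Fin 2) (Fin 2) F) = !![-1, i; i, 0])
    (h4 : (h 3 : Matrix (Fin 2) (Fin 2) F) = !![-1, -i; -i, 0]) :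
    (∀ k, orderOf (h k) = 3) ∧
    (∀ k l, k ≠ l →
      ((h k * h l) ^ 2 : Matrix.SpecialLinearGroup (Fin 2) F) =
        ((h 0 * h 1) ^ 2 : Matrix.SpecialLinearGroup (Fin 2) F)) ∧
    (∀ k l, k ≠ l →
      (((h k * h l) ^ 2 : Matrix.SpecialLinearGroup (Fin 2) F) :
          Matrix (Fin 2) (Fin 2) F) = -1) ∧
    Subgroup.closure (Set.range h) = ⊤ := by
  have three : (3 : F) = 0 := three_eq_zero_of_card_eq_nine hF
  have hmoore : ∀ k, (h k : Matrix (Fin 2) (Fin 2) F) = mooreMatrix i k := by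
    intro k
    fin_cases k <;> assumption
  have hsq : ∀ k l, k ≠ l →
      (((h k * h l) ^ 2 : SL(2, F)) : Matrix (Fin 2) (Fin 2) F) = -1 := fun k l hkl ↦
    SpecialLinearGroup.coe_sq_eq_neg_one_of_trace_eq_zero _ <| by
      simpa [hmoore] using trace_mooreMatrix_mul three hi hkl
  refine ⟨fun k ↦ ?_, fun k l hkl ↦ Subtype.ext ((hsq k l hkl).trans (hsq 0 1 (by decide)).symm),
    hsq, ?_⟩
  · refine orderOf_eq_prime ?_ fun e ↦ mooreMatrix_ne_one hi k (by simp [← hmoore, e])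
    exact SpecialLinearGroup.pow_three_eq_one_of_trace_eq_neg_one _
      (hmoore k ▸ trace_mooreMatrix i k)
  · exact SpecialLinearGroup.SL2_eq_top_of_transvection_mem
      (addSubgroupClosure_one_sqrt_neg_one_eq_top hF hi)
      fun _ _ hab _ hc ↦ transvection_mem_closure_mooreMatrix hmoore three hi hab hc
end
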